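/- arXiv:2404.12554 — 2 statements merged into one kernel-verified Lean document; each statement's English description precedes it below -/
import Mathlib

section
/- Let g : ℝⁿ → ℝⁿ be (μ,ν)-bi-Lipschitz with 0 < μ ≤ ν and differentiable, let H(x) = ½|g(x)|², and let x⋆ ∈ ℝⁿ satisfy g(x⋆) = 0. Let J, R : ℝⁿ → ℝⁿˣⁿ be matrix-valued functions such that J(x) is skew-symmetric and R(x) is symmetric positive semidefinite for all x. Suppose x : [0,∞) → ℝⁿ is a differentiable curve satisfying ẋ(t) = (J(x(t)) − R(x(t))) ∇H(x(t)) for all t ≥ 0. Then for every ε > 0, if |x(0) − x⋆| ≤ (μ/ν)·ε, then |x(t) − x⋆| ≤ ε for all t ≥ 0. -/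
/-!
`H` is a Lyapunov function for the flow: skew-symmetry of `J` kills `⟪∇H, J ∇H⟫` and `R ⪰ 0`
gives `⟪∇H, -R ∇H⟫ ≤ 0`, so `t ↦ |g(x t)|` is nonincreasing. Since `g x⋆ = 0`, the bi-Lipschitz
bounds give `μ |x t - x⋆| ≤ |g (x t)| ≤ |g (x 0)| ≤ ν |x 0 - x⋆| ≤ μ ε`.
-/

open scoped RealInnerProductSpace

section InnerProductSpace

variable {E : Type*} [NormedAddCommGroup E] [InnerProductSpace ℝ E]

theorem inner_self_sub_apply_nonpos {J R : E →ₗ[ℝ] E}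
    (hJ : ∀ v w, ⟪J v, w⟫ = -⟪v, J w⟫) (hR : ∀ v, 0 ≤ ⟪v, R v⟫) (v : E) :
    ⟪v, (J - R) v⟫ ≤ 0 := by
  have hJv : ⟪v, J v⟫ = 0 := by
    have := hJ v v
    rw [real_inner_comm] at this
    linarith
  rw [LinearMap.sub_apply, inner_sub_right, hJv]
  linarith [hR v]

theorem antitoneOn_comp_of_inner_gradient_nonpos [CompleteSpace E] {V : E → ℝ}
    (hV : Differentiable ℝ V) {F : E → E} (hF : ∀ y, ⟪gradient V y, F y⟫ ≤ 0)
    {x : ℝ → E} (hx : ∀ t, 0 ≤ t → HasDerivAt x (F (x t)) t) :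
    AntitoneOn (V ∘ x) (Set.Ici 0) := by
  have hderiv : ∀ t, 0 ≤ t → HasDerivAt (V ∘ x) ⟪gradient V (x t), F (x t)⟫ t := fun t ht =>
    (hV (x t)).hasGradientAt.hasFDerivAt.comp_hasDerivAt t (hx t ht)
  refine antitoneOn_of_hasDerivWithinAt_nonpos (convex_Ici 0)
    (fun t ht => (hderiv t ht).continuousAt.continuousWithinAt) (fun t ht => ?_)
    (fun t _ => hF (x t))
  rw [interior_Ici] at ht
  exact (hderiv t (le_of_lt ht)).hasDerivWithinAt

end InnerProductSpace

theorem norm_sub_le_of_norm_apply_le {E F : Type*} [SeminormedAddCommGroup E]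
    [SeminormedAddCommGroup F] {μ ν ε : ℝ} (hμ : 0 < μ) (hν : 0 < ν) {g : E → F} {xs y z : E}
    (hxs : g xs = 0) (hlow : μ * ‖y - xs‖ ≤ ‖g y - g xs‖) (hup : ‖g z - g xs‖ ≤ ν * ‖z - xs‖)
    (hgyz : ‖g y‖ ≤ ‖g z‖) (hz : ‖z - xs‖ ≤ (μ / ν) * ε) :
    ‖y - xs‖ ≤ ε := by
  rw [hxs, sub_zero] at hlow hup
  refine le_of_mul_le_mul_left ?_ hμ
  calc μ * ‖y - xs‖ ≤ ν * ‖z - xs‖ := hlow.trans (hgyz.trans hup)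
    _ ≤ ν * ((μ / ν) * ε) := mul_le_mul_of_nonneg_left hz hν.le
    _ = μ * ε := by field_simp

theorem stable_hamiltonian_lyapunov_stability_general
    {n : ℕ} (μ ν : ℝ) (hμ : 0 < μ) (hμν : μ ≤ ν)
    (g : EuclideanSpace ℝ (Fin n) → EuclideanSpace ℝ (Fin n))
    (hg : Differentiable ℝ g)
    (hlow : ∀ x x' : EuclideanSpace ℝ (Fin n), μ * ‖x - x'‖ ≤ ‖g x - g x'‖)
    (hup : ∀ x x' : EuclideanSpace ℝ (Fin n), ‖g x - g x'‖ ≤ ν * ‖x - x'‖)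
    (H : EuclideanSpace ℝ (Fin n) → ℝ)
    (hH : H = fun x => (1 / 2 : ℝ) * ‖g x‖ ^ 2)
    (xs : EuclideanSpace ℝ (Fin n)) (hxs : g xs = 0)
    (J R : EuclideanSpace ℝ (Fin n) →
      (EuclideanSpace ℝ (Fin n) →ₗ[ℝ] EuclideanSpace ℝ (Fin n)))
    (hJskew : ∀ x v w, ⟪J x v, w⟫ = -⟪v, J x w⟫)
    (hRpsd : ∀ x v, 0 ≤ ⟪v, R x v⟫)
    (x : ℝ → EuclideanSpace ℝ (Fin n))
    (hx : ∀ t : ℝ, 0 ≤ t →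
      HasDerivAt x ((J (x t) - R (x t)) (gradient H (x t))) t)
    (ε : ℝ)
    (h0 : ‖x 0 - xs‖ ≤ (μ / ν) * ε) :
    ∀ t : ℝ, 0 ≤ t → ‖x t - xs‖ ≤ ε := by
  intro t ht
  have hHdiff : Differentiable ℝ H := hH ▸ (hg.norm_sq ℝ).const_mul _
  have hHt : H (x t) ≤ H (x 0) :=
    antitoneOn_comp_of_inner_gradient_nonpos hHdiff
      (fun y => inner_self_sub_apply_nonpos (hJskew y) (hRpsd y) _) hx
      Set.self_mem_Ici ht ht
  have hgt : ‖g (x t)‖ ≤ ‖g (x 0)‖ := by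
    simp only [hH] at hHt
    nlinarith [norm_nonneg (g (x t)), norm_nonneg (g (x 0))]
  exact norm_sub_le_of_norm_apply_le hμ (hμ.trans_le hμν) hxs (hlow _ _) (hup _ _) hgt h0

/-- Lyapunov stability of the stable Hamiltonian neural dynamics
`ẋ = (J(x) − R(x)) ∇H(x)` with `H(x) = ½|g(x)|²` for a (μ,ν)-bi-Lipschitz `g`:
if `|x(0) − x⋆| ≤ (μ/ν)·ε` then `|x(t) − x⋆| ≤ ε` for all `t ≥ 0`. -/
theorem stable_hamiltonian_lyapunov_stability
    {n : ℕ} (μ ν : ℝ) (hμ : 0 < μ) (hμν : μ ≤ ν)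
    (g : EuclideanSpace ℝ (Fin n) → EuclideanSpace ℝ (Fin n))
    (hg : Differentiable ℝ g)
    (hlow : ∀ x x' : EuclideanSpace ℝ (Fin n), μ * ‖x - x'‖ ≤ ‖g x - g x'‖)
    (hup : ∀ x x' : EuclideanSpace ℝ (Fin n), ‖g x - g x'‖ ≤ ν * ‖x - x'‖)
    (H : EuclideanSpace ℝ (Fin n) → ℝ)
    (hH : H = fun x => (1 / 2 : ℝ) * ‖g x‖ ^ 2)
    (xs : EuclideanSpace ℝ (Fin n)) (hxs : g xs = 0)
    (J R : EuclideanSpace ℝ (Fin n) →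
      (EuclideanSpace ℝ (Fin n) →ₗ[ℝ] EuclideanSpace ℝ (Fin n)))
    (hJskew : ∀ x v w, ⟪J x v, w⟫ = -⟪v, J x w⟫)
    (hRsymm : ∀ x v w, ⟪R x v, w⟫ = ⟪v, R x w⟫)
    (hRpsd : ∀ x v, 0 ≤ ⟪v, R x v⟫)
    (x : ℝ → EuclideanSpace ℝ (Fin n))
    (hx : ∀ t : ℝ, 0 ≤ t →
      HasDerivAt x ((J (x t) - R (x t)) (gradient H (x t))) t)
    (ε : ℝ) (hε : 0 < ε)
    (h0 : ‖x 0 - xs‖ ≤ (μ / ν) * ε) :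
    ∀ t : ℝ, 0 ≤ t → ‖x t - xs‖ ≤ ε :=
  stable_hamiltonian_lyapunov_stability_general μ ν hμ hμν g hg hlow hup H hH xs hxs J R hJskew
    hRpsd x hx ε h0
end

section
/- Let g : ℝⁿ → ℝⁿ be (μ,ν)-bi-Lipschitz with 0 < μ ≤ ν and differentiable, let H(x) = ½|g(x)|², and let x⋆ ∈ ℝⁿ satisfy g(x⋆) = 0. Let J, R : ℝⁿ → ℝⁿˣⁿ be matrix-valued functions such that J(x) is skew-symmetric and, for some ε > 0, R(x) is symmetric with R(x) ⪰ εI for all x. Suppose x : [0,∞) → ℝⁿ is a differentiable curve satisfying ẋ(t) = (J(x(t)) − R(x(t))) ∇H(x(t)) for all t ≥ 0. Then |x(t) − x⋆| ≤ (ν/μ)·e^{−εμ²t}·|x(0) − x⋆| for all t ≥ 0; that is, the system is globally exponentially stable at x⋆ with rate λ = εμ² and overshoot κ = ν/μ. -/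
/-!
The Hamiltonian `H = ½‖g‖²` is a Lyapunov function. Along a trajectory,
`d/dt H(x) = ⟪∇H, (J - R) ∇H⟫ = -⟪∇H, R ∇H⟫ ≤ -ε ‖∇H‖²`, and `∇H(y) = Dg(y)* g(y)` with
`‖Dg(y)* w‖ ≥ μ ‖w‖`, since the lower Lipschitz bound passes to `Dg(y)` and then, in finite
dimension, to its adjoint. Hence `dH/dt ≤ -2εμ² H`, Grönwall gives `‖g(x t)‖ ≤ e^{-εμ²t} ‖g(x 0)‖`,
and the two Lipschitz bounds around the zero `x⋆` of `g` turn this into the claim.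
-/

open scoped RealInnerProductSpace
open Filter Set

theorem HasFDerivAt.mul_norm_le_norm_apply_of_lower_bound {E F : Type*}
    [NormedAddCommGroup E] [NormedSpace ℝ E] [NormedAddCommGroup F] [NormedSpace ℝ F]
    {g : E → F} {D : E →L[ℝ] F} {y : E} {μ : ℝ} (hg : HasFDerivAt g D y)
    (hlow : ∀ x x', μ * ‖x - x'‖ ≤ ‖g x - g x'‖) (v : E) :
    μ * ‖v‖ ≤ ‖D v‖ := by
  refine ge_of_tendsto (hg.lim v tendsto_norm_atTop_atTop).norm ?_
  filter_upwards [eventually_ne_atTop 0] with c hc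
  calc μ * ‖v‖ = ‖c‖ * (μ * ‖(y + c⁻¹ • v) - y‖) := by
        rw [add_sub_cancel_left, norm_smul, norm_inv]
        field_simp
    _ ≤ ‖c • (g (y + c⁻¹ • v) - g y)‖ := by
        rw [norm_smul]
        exact mul_le_mul_of_nonneg_left (hlow _ _) (norm_nonneg c)

variable {E F : Type*} [NormedAddCommGroup E] [InnerProductSpace ℝ E]
  [NormedAddCommGroup F] [InnerProductSpace ℝ F]

theorem HasFDerivAt.hasGradientAt_half_norm_sq [CompleteSpace E] [CompleteSpace F]
    {g : E → F} {D : E →L[ℝ] F} {y : E} (hg : HasFDerivAt g D y) :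
    HasGradientAt (fun x => (1 / 2 : ℝ) * ‖g x‖ ^ 2) (D.adjoint (g y)) y := by
  rw [hasGradientAt_iff_hasFDerivAt]
  refine (hg.norm_sq.const_smul (1 / 2 : ℝ)).congr_fderiv ?_
  ext v
  simp [ContinuousLinearMap.adjoint_inner_left]

theorem ContinuousLinearMap.mul_norm_le_norm_adjoint_apply [FiniteDimensional ℝ E]
    {A : E →L[ℝ] E} {μ : ℝ} (hμ : 0 < μ) (hA : ∀ v, μ * ‖v‖ ≤ ‖A v‖) (w : E) :
    μ * ‖w‖ ≤ ‖A.adjoint w‖ := by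
  have hinj : Function.Injective A := by
    refine (injective_iff_map_eq_zero A).2 fun v hv => norm_eq_zero.1 ?_
    nlinarith [hA v, norm_nonneg v, norm_eq_zero.2 hv]
  obtain ⟨v, rfl⟩ : ∃ v, A v = w :=
    (LinearMap.injective_iff_surjective (f := A.toLinearMap)).1 hinj w
  have hAv : ‖A v‖ ^ 2 ≤ ‖A.adjoint (A v)‖ * ‖v‖ := by
    rw [← real_inner_self_eq_norm_sq, ← ContinuousLinearMap.adjoint_inner_left]
    exact real_inner_le_norm _ _
  rcases (norm_nonneg (A v)).eq_or_lt with h0 | hpos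
  · rw [← h0, mul_zero]
    exact norm_nonneg _
  · refine le_of_mul_le_mul_right ?_ hpos
    nlinarith [hA v, norm_nonneg (A.adjoint (A v))]

theorem inner_sub_apply_self_le_of_skew {J R : E →ₗ[ℝ] E} {ε : ℝ}
    (hJ : ∀ v w, ⟪J v, w⟫ = -⟪v, J w⟫) (hR : ∀ v, ε * ‖v‖ ^ 2 ≤ ⟪v, R v⟫) (p : E) :
    ⟪p, (J - R) p⟫ ≤ -(ε * ‖p‖ ^ 2) := by
  have hJp : ⟪p, J p⟫ = 0 := by
    have := hJ p p
    rw [real_inner_comm] at this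
    linarith
  rw [LinearMap.sub_apply, inner_sub_right, hJp]
  linarith [hR p]

theorem le_mul_exp_of_hasDerivAt_le_neg_mul {f f' : ℝ → ℝ} {c t : ℝ}
    (hf : ∀ s, 0 ≤ s → HasDerivAt f (f' s) s) (hbound : ∀ s, 0 ≤ s → f' s ≤ -c * f s)
    (ht : 0 ≤ t) : f t ≤ f 0 * Real.exp (-c * t) := by
  have hcont : ContinuousOn f (Icc 0 t) := fun s hs =>
    (hf s hs.1).continuousAt.continuousWithinAt
  have := le_gronwallBound_of_liminf_deriv_right_le (K := -c) (ε := 0) hcont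
    (fun s hs _ hr => (hf s hs.1).hasDerivWithinAt.liminf_right_slope_le hr) le_rfl
    (fun s hs => (add_zero (-c * f s)).symm ▸ hbound s hs.1) t ⟨ht, le_rfl⟩
  rwa [gronwallBound_ε0, sub_zero] at this

theorem norm_comp_le_exp_mul_norm_comp_zero [FiniteDimensional ℝ E] {μ ε t : ℝ} {g : E → E}
    (hμ : 0 < μ) (hε : 0 ≤ ε) (hg : Differentiable ℝ g)
    (hlow : ∀ x x', μ * ‖x - x'‖ ≤ ‖g x - g x'‖) (J R : E → E →ₗ[ℝ] E)
    (hJ : ∀ y v w, ⟪J y v, w⟫ = -⟪v, J y w⟫) (hR : ∀ y v, ε * ‖v‖ ^ 2 ≤ ⟪v, R y v⟫)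
    (x : ℝ → E) (hx : ∀ s, 0 ≤ s →
      HasDerivAt x ((J (x s) - R (x s)) (gradient (fun y => (1 / 2 : ℝ) * ‖g y‖ ^ 2) (x s))) s)
    (ht : 0 ≤ t) :
    ‖g (x t)‖ ≤ Real.exp (-(ε * μ ^ 2) * t) * ‖g (x 0)‖ := by
  set H : E → ℝ := fun y => (1 / 2 : ℝ) * ‖g y‖ ^ 2
  have hgrad (y : E) : HasGradientAt H ((fderiv ℝ g y).adjoint (g y)) y :=
    (hg y).hasFDerivAt.hasGradientAt_half_norm_sq
  have hgrad_lower (y : E) : μ * ‖g y‖ ≤ ‖gradient H y‖ := by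
    rw [(hgrad y).gradient]
    exact ContinuousLinearMap.mul_norm_le_norm_adjoint_apply hμ
      ((hg y).hasFDerivAt.mul_norm_le_norm_apply_of_lower_bound hlow) _
  have hderiv (s : ℝ) (hs : 0 ≤ s) : HasDerivAt (H ∘ x)
      ⟪gradient H (x s), (J (x s) - R (x s)) (gradient H (x s))⟫ s :=
    (hgrad (x s)).differentiableAt.hasGradientAt.hasFDerivAt.comp_hasDerivAt s (hx s hs)
  have hdissip (s : ℝ) (hs : 0 ≤ s) :
      ⟪gradient H (x s), (J (x s) - R (x s)) (gradient H (x s))⟫ ≤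
        -(2 * (ε * μ ^ 2)) * H (x s) :=
    calc _ ≤ -(ε * ‖gradient H (x s)‖ ^ 2) := inner_sub_apply_self_le_of_skew (hJ _) (hR _) _
      _ ≤ -(ε * (μ * ‖g (x s)‖) ^ 2) := by
          gcongr
          exact hgrad_lower _
      _ = _ := by ring
  have hdecay : H (x t) ≤ H (x 0) * Real.exp (-(2 * (ε * μ ^ 2)) * t) :=
    le_mul_exp_of_hasDerivAt_le_neg_mul hderiv hdissip ht
  rw [← sq_le_sq₀ (norm_nonneg _) (by positivity)]
  calc ‖g (x t)‖ ^ 2 = 2 * H (x t) := by ring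
    _ ≤ 2 * (H (x 0) * Real.exp (-(2 * (ε * μ ^ 2)) * t)) := by gcongr
    _ = (Real.exp (-(ε * μ ^ 2) * t) * ‖g (x 0)‖) ^ 2 := by
        rw [mul_pow, ← Real.exp_nat_mul]
        simp only [H]
        ring_nf

theorem stable_hamiltonian_exponential_stability_general
    {n : ℕ} (μ ν : ℝ) (hμ : 0 < μ)
    (g : EuclideanSpace ℝ (Fin n) → EuclideanSpace ℝ (Fin n))
    (hg : Differentiable ℝ g)
    (hlow : ∀ x x' : EuclideanSpace ℝ (Fin n), μ * ‖x - x'‖ ≤ ‖g x - g x'‖)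
    (hup : ∀ x x' : EuclideanSpace ℝ (Fin n), ‖g x - g x'‖ ≤ ν * ‖x - x'‖)
    (H : EuclideanSpace ℝ (Fin n) → ℝ)
    (hH : H = fun x => (1 / 2 : ℝ) * ‖g x‖ ^ 2)
    (xs : EuclideanSpace ℝ (Fin n)) (hxs : g xs = 0)
    (J R : EuclideanSpace ℝ (Fin n) →
      (EuclideanSpace ℝ (Fin n) →ₗ[ℝ] EuclideanSpace ℝ (Fin n)))
    (hJskew : ∀ x v w, ⟪J x v, w⟫ = -⟪v, J x w⟫)
    (ε : ℝ) (hε : 0 < ε)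
    (hRlb : ∀ x v, ε * ‖v‖ ^ 2 ≤ ⟪v, R x v⟫)
    (x : ℝ → EuclideanSpace ℝ (Fin n))
    (hx : ∀ t : ℝ, 0 ≤ t →
      HasDerivAt x ((J (x t) - R (x t)) (gradient H (x t))) t) :
    ∀ t : ℝ, 0 ≤ t →
      ‖x t - xs‖ ≤ (ν / μ) * Real.exp (-(ε * μ ^ 2) * t) * ‖x 0 - xs‖ := by
  intro t ht
  subst hH
  have hdecay := norm_comp_le_exp_mul_norm_comp_zero hμ hε.le hg hlow J R hJskew hRlb x hx ht
  rw [div_mul_eq_mul_div, div_mul_eq_mul_div, le_div_iff₀ hμ]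
  calc ‖x t - xs‖ * μ = μ * ‖x t - xs‖ := mul_comm _ _
    _ ≤ ‖g (x t)‖ := by simpa [hxs] using hlow (x t) xs
    _ ≤ Real.exp (-(ε * μ ^ 2) * t) * ‖g (x 0)‖ := hdecay
    _ ≤ Real.exp (-(ε * μ ^ 2) * t) * (ν * ‖x 0 - xs‖) := by
        gcongr
        simpa [hxs] using hup (x 0) xs
    _ = ν * Real.exp (-(ε * μ ^ 2) * t) * ‖x 0 - xs‖ := by ring

/-- Global exponential stability of the stable Hamiltonian neural dynamics
`ẋ = (J(x) − R(x)) ∇H(x)` with `H(x) = ½|g(x)|²`, `g` (μ,ν)-bi-Lipschitz and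
`R(x) ⪰ εI`: `|x(t) − x⋆| ≤ (ν/μ)·e^{−εμ²t}·|x(0) − x⋆|` for all `t ≥ 0`. -/
theorem stable_hamiltonian_exponential_stability
    {n : ℕ} (μ ν : ℝ) (hμ : 0 < μ) (hμν : μ ≤ ν)
    (g : EuclideanSpace ℝ (Fin n) → EuclideanSpace ℝ (Fin n))
    (hg : Differentiable ℝ g)
    (hlow : ∀ x x' : EuclideanSpace ℝ (Fin n), μ * ‖x - x'‖ ≤ ‖g x - g x'‖)
    (hup : ∀ x x' : EuclideanSpace ℝ (Fin n), ‖g x - g x'‖ ≤ ν * ‖x - x'‖)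
    (H : EuclideanSpace ℝ (Fin n) → ℝ)
    (hH : H = fun x => (1 / 2 : ℝ) * ‖g x‖ ^ 2)
    (xs : EuclideanSpace ℝ (Fin n)) (hxs : g xs = 0)
    (J R : EuclideanSpace ℝ (Fin n) →
      (EuclideanSpace ℝ (Fin n) →ₗ[ℝ] EuclideanSpace ℝ (Fin n)))
    (hJskew : ∀ x v w, ⟪J x v, w⟫ = -⟪v, J x w⟫)
    (hRsymm : ∀ x v w, ⟪R x v, w⟫ = ⟪v, R x w⟫)
    (ε : ℝ) (hε : 0 < ε)
    (hRlb : ∀ x v, ε * ‖v‖ ^ 2 ≤ ⟪v, R x v⟫)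
    (x : ℝ → EuclideanSpace ℝ (Fin n))
    (hx : ∀ t : ℝ, 0 ≤ t →
      HasDerivAt x ((J (x t) - R (x t)) (gradient H (x t))) t) :
    ∀ t : ℝ, 0 ≤ t →
      ‖x t - xs‖ ≤ (ν / μ) * Real.exp (-(ε * μ ^ 2) * t) * ‖x 0 - xs‖ :=
  stable_hamiltonian_exponential_stability_general μ ν hμ g hg hlow hup H hH xs hxs J R hJskew ε hε
    hRlb x hx
end
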